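/- Let d ≥ 3 and θ > 0. Let 𝒬 be a family of cubes satisfying (G), and let ω : ℝ^d → ℝ be measurable with 0 < δ ≤ ω(x) ≤ 1 for all x and some δ > 0. Assume there exist C₀ > 0 and λ > 0 such that |ω(x) − ω(y)| ≤ C₀ (|x − y| / d_Q)^λ for every Q ∈ 𝒬 and all x, y ∈ Q**. Then there is a constant C > 0, depending only on d, θ, δ, λ, C₀ and the constant in (G), such that every (ω,𝒬)-atom a belongs to H¹_at(𝒜_𝒬) with ‖a‖_{H¹_at(𝒜_𝒬)} ≤ C. -/

import Mathlib

/-!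
Let `a` be an `(ω,𝒬)`-atom supported in a cube `K ⊆ Q**` and `m = ∫ a`. Then
`a - m |K|⁻¹ χ_K` is `(1 + |m|)` times a `𝒬`-atom, and `|K|⁻¹ χ_K - |Q|⁻¹ χ_Q` telescopes along a
chain of cubes `K = K₀ ⊆ K₁ ⊆ ⋯ ⊆ K_N = Q**` whose radii double at each step: every difference is
a bounded multiple of a `𝒬`-atom, so this costs `O(N)` with `N ≈ log₂ (r_Q / r_K)`. Since
`∫ a ω = 0` and `ω` is Hölder on `Q**` and bounded below by `δ`, `|m| ≲ (r_K / r_Q) ^ λ`,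
which beats the logarithm, so `N |m|` stays bounded. Atoms of type (ii) are already `𝒬`-atoms.
-/

open MeasureTheory Filter
open scoped ENNReal

noncomputable section

/-- `ℝ^d` as a Euclidean space. -/
abbrev Rd (d : ℕ) := EuclideanSpace ℝ (Fin d)

/-- A cube in `ℝ^d`, given by its center and (positive) radius. -/
structure Cube (d : ℕ) where
  center : Rd d
  radius : ℝ
  radius_pos : 0 < radius

/-- The underlying open set of a cube: `Q(c,r) = {y : max_i |c_i - y_i| < r}`. -/
def Cube.carrier {d : ℕ} (Q : Cube d) : Set (Rd d) :=
  {y | ∀ i, |Q.center i - y i| < Q.radius}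

/-- The diameter `d_Q = 2 √d · r_Q` of a cube. -/
def Cube.diam {d : ℕ} (Q : Cube d) : ℝ := 2 * Real.sqrt d * Q.radius

/-- The `k`-fold enlargement `Q^{*k} = Q(c_Q, (1+θ)^k r_Q)` of a cube, as a set. -/
def Cube.starSet {d : ℕ} (Q : Cube d) (θ : ℝ) (k : ℕ) : Set (Rd d) :=
  {y | ∀ i, |Q.center i - y i| < (1 + θ) ^ k * Q.radius}

/-- The condition (G) on a family of cubes: it is countable, the closures cover `ℝ^d`,
distinct cubes overlap in measure zero, and cubes whose fourfold enlargements meet have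
comparable diameters (with constant `CG`). -/
def SatG {d : ℕ} (θ CG : ℝ) (𝒬 : Set (Cube d)) : Prop :=
  𝒬.Countable ∧
  (⋃ Q ∈ 𝒬, closure Q.carrier) = Set.univ ∧
  (∀ Q₁ ∈ 𝒬, ∀ Q₂ ∈ 𝒬, Q₁ ≠ Q₂ → volume (Q₁.carrier ∩ Q₂.carrier) = 0) ∧
  (∀ Q₁ ∈ 𝒬, ∀ Q₂ ∈ 𝒬, (Q₁.starSet θ 4 ∩ Q₂.starSet θ 4).Nonempty →
    CG⁻¹ * Q₁.diam ≤ Q₂.diam ∧ Q₂.diam ≤ CG * Q₁.diam)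

/-- An `(ω,𝒬)`-atom: either a function supported in a cube `K ⊆ Q^{**}` (`Q ∈ 𝒬`) with
`‖a‖_∞ ≤ |K|⁻¹` and `∫_K a ω = 0`, or `a = |Q|⁻¹ χ_Q` for some `Q ∈ 𝒬`.
Taking `ω ≡ 1` gives the notion of a `𝒬`-atom. -/
def IsWAtom {d : ℕ} (θ : ℝ) (𝒬 : Set (Cube d)) (ω : Rd d → ℝ) (a : Rd d → ℝ) : Prop :=
  Integrable a ∧
  ((∃ Q ∈ 𝒬, ∃ K : Cube d, K.carrier ⊆ Q.starSet θ 2 ∧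
      Function.support a ⊆ K.carrier ∧
      (∀ᵐ x ∂volume, |a x| ≤ ((volume K.carrier).toReal)⁻¹) ∧
      ∫ x in K.carrier, a x * ω x = 0) ∨
    (∃ Q ∈ 𝒬, a = (Q.carrier).indicator (fun _ => ((volume Q.carrier).toReal)⁻¹)))

/-- `f = ∑ λ_j a_j` is an atomic decomposition: all `a_j` are atoms (i.e. satisfy `𝒜`),
`∑ |λ_j| < ∞`, and the partial sums converge to `f` in `L¹`. -/
def IsDecomp {d : ℕ} (𝒜 : (Rd d → ℝ) → Prop) (f : Rd d → ℝ)
    (lam : ℕ → ℝ) (a : ℕ → Rd d → ℝ) : Prop :=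
  (∀ j, 𝒜 (a j)) ∧ Summable (fun j => |lam j|) ∧
  Tendsto (fun N => ∫ x, |f x - ∑ j ∈ Finset.range N, lam j * a j x|) atTop (nhds 0)

/-- Membership in the atomic Hardy space `H¹_at(𝒜)`. -/
def MemH1at {d : ℕ} (𝒜 : (Rd d → ℝ) → Prop) (f : Rd d → ℝ) : Prop :=
  ∃ lam a, IsDecomp 𝒜 f lam a

/-- The atomic norm `‖f‖_{H¹_at(𝒜)} = inf ∑ |λ_j|` over all atomic decompositions. -/
def H1atNorm {d : ℕ} (𝒜 : (Rd d → ℝ) → Prop) (f : Rd d → ℝ) : ℝ :=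
  sInf {s | ∃ lam a, IsDecomp 𝒜 f lam a ∧ s = ∑' j, |lam j|}

-- These also hold when `r₁ = r₀`: the quotients are then `0` and `h` forces `x₁ = x₀`.
lemma abs_lerp_sub_lerp_le {x₀ x₁ r₀ r₁ ρ ρ' : ℝ} (h : |x₁ - x₀| ≤ r₁ - r₀) (hρ : ρ ≤ ρ') :
    |(x₀ + (ρ' - r₀) / (r₁ - r₀) * (x₁ - x₀)) - (x₀ + (ρ - r₀) / (r₁ - r₀) * (x₁ - x₀))|
      ≤ ρ' - ρ := by
  rcases (abs_nonneg _).trans h |>.eq_or_lt with hr | hr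
  · simp [← hr, hρ]
  calc _ = (ρ' - ρ) / (r₁ - r₀) * |x₁ - x₀| := by
        rw [← abs_of_nonneg (div_nonneg (sub_nonneg.2 hρ) hr.le), ← abs_mul]; ring_nf
    _ ≤ (ρ' - ρ) / (r₁ - r₀) * (r₁ - r₀) := by gcongr
    _ = ρ' - ρ := div_mul_cancel₀ _ hr.ne'

lemma lerp_right {x₀ x₁ r₀ r₁ : ℝ} (h : |x₁ - x₀| ≤ r₁ - r₀) :
    x₀ + (r₁ - r₀) / (r₁ - r₀) * (x₁ - x₀) = x₁ := by
  rcases (abs_nonneg _).trans h |>.eq_or_lt with hr | hr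
  · rw [← hr] at h ⊢
    linarith [abs_nonpos_iff.1 h, zero_div (0 : ℝ)]
  · rw [div_self hr.ne']; ring

namespace Cube

variable {d : ℕ}

def box (c : Rd d) (r : ℝ) : Set (Rd d) := {y | ∀ i, |c i - y i| < r}

lemma box_eq_preimage (c : Rd d) (r : ℝ) :
    box c r = (MeasurableEquiv.toLp 2 (Fin d → ℝ)).symm ⁻¹'
      Set.univ.pi fun i => Set.Ioo (c i - r) (c i + r) := by
  ext y
  simp only [box, Set.mem_ofPred_eq, Set.mem_preimage, Set.mem_univ_pi, Set.mem_Ioo,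
    MeasurableEquiv.toLp_symm_apply, abs_sub_lt_iff]
  exact forall_congr' fun i => by constructor <;> rintro ⟨h₁, h₂⟩ <;> constructor <;> linarith

lemma box_subset_box_iff {c c' : Rd d} {r r' : ℝ} (hr' : 0 < r') :
    box c' r' ⊆ box c r ↔ ∀ i, |c i - c' i| ≤ r - r' := by
  rw [box_eq_preimage, box_eq_preimage,
    (MeasurableEquiv.toLp 2 (Fin d → ℝ)).symm.surjective.preimage_subset_preimage_iff,
    Set.pi_subset_pi_iff, or_iff_left (Set.univ_pi_nonempty_iff.2 fun i =>
      Set.nonempty_Ioo.2 (by linarith)).ne_empty]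
  refine forall_congr' fun i => ?_
  rw [forall_prop_of_true (Set.mem_univ i), Set.Ioo_subset_Ioo_iff (by linarith), abs_sub_le_iff]
  constructor <;> rintro ⟨h₁, h₂⟩ <;> constructor <;> linarith

lemma carrier_eq_box (Q : Cube d) : Q.carrier = box Q.center Q.radius := rfl

lemma measurableSet_carrier (Q : Cube d) : MeasurableSet Q.carrier := by
  rw [carrier_eq_box, box_eq_preimage]
  exact (MeasurableEquiv.toLp 2 (Fin d → ℝ)).symm.measurable
    (MeasurableSet.univ_pi fun _ => measurableSet_Ioo)

lemma volume_carrier (Q : Cube d) :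
    volume Q.carrier = ENNReal.ofReal ((2 * Q.radius) ^ d) := by
  have hr := Q.radius_pos
  rw [carrier_eq_box, box_eq_preimage,
    (EuclideanSpace.volume_preserving_symm_measurableEquiv_toLp (Fin d)).measure_preimage
      (MeasurableSet.univ_pi fun _ => measurableSet_Ioo).nullMeasurableSet,
    volume_pi_pi, ENNReal.ofReal_pow (by positivity)]
  simp only [Real.volume_Ioo, add_sub_sub_cancel, ← two_mul]
  simp

lemma volume_carrier_lt_top (Q : Cube d) : volume Q.carrier < ⊤ := by
  rw [volume_carrier]; exact ENNReal.ofReal_lt_top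

lemma volume_toReal (Q : Cube d) : (volume Q.carrier).toReal = (2 * Q.radius) ^ d := by
  rw [volume_carrier, ENNReal.toReal_ofReal (by have := Q.radius_pos; positivity)]

lemma volume_toReal_pos (Q : Cube d) : 0 < (volume Q.carrier).toReal := by
  rw [volume_toReal]; have := Q.radius_pos; positivity

lemma center_mem (Q : Cube d) : Q.center ∈ Q.carrier := fun _ => by simpa using Q.radius_pos

lemma diam_pos (Q : Cube d) (hd : 0 < d) : 0 < Q.diam := by
  have := Q.radius_pos
  have : 0 < √(d : ℝ) := Real.sqrt_pos.2 (Nat.cast_pos.2 hd)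
  rw [diam]; positivity

lemma norm_center_sub_le {Q : Cube d} {x : Rd d} (hx : x ∈ Q.carrier) :
    ‖Q.center - x‖ ≤ √d * Q.radius := by
  rw [EuclideanSpace.norm_eq, ← Real.sqrt_sq Q.radius_pos.le, ← Real.sqrt_mul (Nat.cast_nonneg d)]
  refine Real.sqrt_le_sqrt ?_
  calc ∑ i, ‖(Q.center - x) i‖ ^ 2 ≤ ∑ _i : Fin d, Q.radius ^ 2 := by
        gcongr with i
        simpa [Real.norm_eq_abs] using (hx i).le
    _ = d * Q.radius ^ 2 := by simp

/-- The centres slide linearly from `K.center` to `c` as the radii grow, which keeps the chain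
increasing. -/
lemma exists_doubling_chain (K : Cube d) {c : Rd d} {s : ℝ} (hd : 0 < d)
    (hK : K.carrier ⊆ box c s) :
    ∃ (N : ℕ) (L : ℕ → Cube d), 2 ^ N * K.radius ≤ 2 * s ∧ (L 0).carrier = K.carrier ∧
      Monotone (fun j => (L j).carrier) ∧ (∀ j, (L (j + 1)).radius ≤ 2 * (L j).radius) ∧
      (L N).carrier = box c s ∧ (L N).radius = s := by
  set r := K.radius
  have hr : 0 < r := K.radius_pos
  have hcoord := (box_subset_box_iff hr).1 hK
  have hrs : r ≤ s := by linarith [hcoord ⟨0, hd⟩, abs_nonneg (c ⟨0, hd⟩ - K.center ⟨0, hd⟩)]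
  obtain ⟨n, hn₁, hn₂⟩ := exists_nat_pow_near ((one_le_div hr).2 hrs) one_lt_two
  rw [le_div_iff₀ hr] at hn₁
  replace hn₂ : s ≤ 2 ^ (n + 1) * r := ((div_lt_iff₀ hr).1 hn₂).le
  set ρ : ℕ → ℝ := fun j => min (2 ^ j * r) s
  have hρ_mono : Monotone ρ := fun i j hij => min_le_min_right s (by gcongr; norm_num)
  let L : ℕ → Cube d := fun j =>
    ⟨K.center + ((ρ j - r) / (s - r)) • (c - K.center), ρ j,
      lt_min (by positivity) (hr.trans_le hrs)⟩
  have hL_center : ∀ j i,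
      (L j).center i = K.center i + (ρ j - r) / (s - r) * (c i - K.center i) := fun j i => by
    simp [L]
  have hL_end : (L (n + 1)).center = c := by
    ext i
    rw [hL_center, show ρ (n + 1) = s from min_eq_right hn₂]
    exact lerp_right (hcoord i)
  refine ⟨n + 1, L, by rw [pow_succ]; linarith, ?_, ?_, ?_, ?_, min_eq_right hn₂⟩
  · simp [L, ρ, Cube.carrier, min_eq_left hrs, r]
  · refine monotone_nat_of_le_succ fun j => (box_subset_box_iff (L j).radius_pos).2 fun i => ?_
    rw [hL_center, hL_center]
    exact abs_lerp_sub_lerp_le (hcoord i) (hρ_mono j.le_succ)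
  · intro j
    calc ρ (j + 1) ≤ min (2 * (2 ^ j * r)) (2 * s) := min_le_min (by ring_nf; rfl) (by linarith)
      _ = 2 * ρ j := (mul_min_of_nonneg _ _ zero_le_two).symm
  · rw [carrier_eq_box, hL_end]; exact congrArg _ (min_eq_right hn₂)

def normalizedIndicator (K : Cube d) : Rd d → ℝ :=
  K.carrier.indicator fun _ => ((volume K.carrier).toReal)⁻¹

lemma normalizedIndicator_congr {K K' : Cube d} (h : K.carrier = K'.carrier) :
    K.normalizedIndicator = K'.normalizedIndicator := by
  rw [normalizedIndicator, normalizedIndicator, h]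

lemma integrable_normalizedIndicator (K : Cube d) : Integrable K.normalizedIndicator :=
  (integrable_indicator_iff K.measurableSet_carrier).2
    (integrableOn_const K.volume_carrier_lt_top.ne)

lemma support_normalizedIndicator_subset (K : Cube d) :
    Function.support K.normalizedIndicator ⊆ K.carrier :=
  Set.support_indicator_subset

lemma abs_normalizedIndicator_le (K : Cube d) (x : Rd d) :
    |K.normalizedIndicator x| ≤ ((volume K.carrier).toReal)⁻¹ := by
  have := K.volume_toReal_pos
  by_cases hx : x ∈ K.carrier <;> simp [normalizedIndicator, hx, this.le]

lemma setIntegral_normalizedIndicator {K : Cube d} {S : Set (Rd d)} (hK : K.carrier ⊆ S) :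
    ∫ x in S, K.normalizedIndicator x = 1 := by
  rw [normalizedIndicator, setIntegral_eq_integral_of_forall_compl_eq_zero fun x hx =>
      Set.indicator_of_notMem (fun h => hx (hK h)) _,
    integral_indicator_const _ K.measurableSet_carrier, measureReal_def, smul_eq_mul,
    mul_inv_cancel₀ K.volume_toReal_pos.ne']

lemma setIntegral_abs_le_one {K : Cube d} {a : Rd d → ℝ} (ha : Integrable a)
    (hbound : ∀ᵐ x, |a x| ≤ ((volume K.carrier).toReal)⁻¹) :
    ∫ x in K.carrier, |a x| ≤ 1 := by
  calc ∫ x in K.carrier, |a x| ≤ ∫ _ in K.carrier, ((volume K.carrier).toReal)⁻¹ :=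
        setIntegral_mono_ae ha.abs.integrableOn
          (integrableOn_const K.volume_carrier_lt_top.ne) hbound
    _ = 1 := by
        rw [setIntegral_const, measureReal_def, smul_eq_mul,
          mul_inv_cancel₀ K.volume_toReal_pos.ne']

end Cube

def FinAtomic {α : Type*} (𝒜 : (α → ℝ) → Prop) (f : α → ℝ) (C : ℝ) : Prop :=
  ∃ (n : ℕ) (c : Fin n → ℝ) (A : Fin n → α → ℝ),
    (∀ i, 𝒜 (A i)) ∧ f = ∑ i, c i • A i ∧ ∑ i, |c i| ≤ C

namespace FinAtomic

variable {α : Type*} {𝒜 : (α → ℝ) → Prop} {f g : α → ℝ} {C D : ℝ}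

lemma zero : FinAtomic 𝒜 0 0 :=
  ⟨0, Fin.elim0, Fin.elim0, Fin.rec0, by simp, by simp⟩

lemma of_atom (ha : 𝒜 f) : FinAtomic 𝒜 f 1 :=
  ⟨1, fun _ => 1, fun _ => f, fun _ => ha, by simp, by simp⟩

lemma mono (h : FinAtomic 𝒜 f C) (hCD : C ≤ D) : FinAtomic 𝒜 f D := by
  obtain ⟨n, c, A, hA, hf, hc⟩ := h
  exact ⟨n, c, A, hA, hf, hc.trans hCD⟩

lemma smul (h : FinAtomic 𝒜 f C) (t : ℝ) : FinAtomic 𝒜 (t • f) (|t| * C) := by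
  obtain ⟨n, c, A, hA, rfl, hc⟩ := h
  refine ⟨n, fun i => t * c i, A, hA, by simp [Finset.smul_sum, mul_smul], ?_⟩
  simp_rw [abs_mul, ← Finset.mul_sum]
  exact mul_le_mul_of_nonneg_left hc (abs_nonneg t)

lemma neg (h : FinAtomic 𝒜 f C) : FinAtomic 𝒜 (-f) C := by
  simpa using h.smul (-1)

lemma add (hf : FinAtomic 𝒜 f C) (hg : FinAtomic 𝒜 g D) : FinAtomic 𝒜 (f + g) (C + D) := by
  obtain ⟨n, c, A, hA, rfl, hc⟩ := hf
  obtain ⟨m, c', A', hA', rfl, hc'⟩ := hg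
  refine ⟨n + m, Fin.append c c', Fin.append A A', Fin.addCases (by simpa) (by simpa),
    by simp [Fin.sum_univ_add], ?_⟩
  simp only [Fin.sum_univ_add, Fin.append_left, Fin.append_right]
  linarith

lemma sum {ι : Type*} (s : Finset ι) {f : ι → α → ℝ} {C : ι → ℝ}
    (h : ∀ i ∈ s, FinAtomic 𝒜 (f i) (C i)) :
    FinAtomic 𝒜 (∑ i ∈ s, f i) (∑ i ∈ s, C i) := by
  classical
  induction s using Finset.induction_on with
  | empty => simpa using zero
  | insert i s hi ih =>
    rw [Finset.sum_insert hi, Finset.sum_insert hi]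
    exact (h i (Finset.mem_insert_self i s)).add
      (ih fun j hj => h j (Finset.mem_insert_of_mem hj))

lemma of_inv_smul (ha : 𝒜 (C⁻¹ • f)) (hC : 0 < C) : FinAtomic 𝒜 f C := by
  simpa [smul_smul, hC.ne', abs_of_pos hC] using (of_atom ha).smul C

/-- `IsDecomp` asks for an atom at every index, so the finite combination is padded by `a₀`
with zero coefficients. -/
lemma memH1at_and_h1atNorm_le {d : ℕ} {𝒜 : (Rd d → ℝ) → Prop} {f : Rd d → ℝ} {a₀ : Rd d → ℝ}
    (h : FinAtomic 𝒜 f C) (ha₀ : 𝒜 a₀) : MemH1at 𝒜 f ∧ H1atNorm 𝒜 f ≤ C := by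
  obtain ⟨n, c, A, hA, rfl, hc⟩ := h
  set lam : ℕ → ℝ := fun j => if h : j < n then c ⟨j, h⟩ else 0
  set A' : ℕ → Rd d → ℝ := fun j => if h : j < n then A ⟨j, h⟩ else a₀
  have hlam : ∀ j ∉ Finset.range n, lam j = 0 := fun j hj => dif_neg (by simpa using hj)
  have hsum : ∀ N, n ≤ N → ∀ x, ∑ j ∈ Finset.range N, lam j * A' j x = (∑ i, c i • A i) x := by
    intro N hN x
    rw [← Finset.sum_subset (Finset.range_subset_range.2 hN)
      (fun j _ hj => by rw [hlam j hj, zero_mul]), ← Fin.sum_univ_eq_sum_range]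
    simp [lam, A', Finset.sum_apply]
  have hdecomp : IsDecomp 𝒜 (∑ i, c i • A i) lam A' := by
    refine ⟨fun j => ?_, summable_of_ne_finset_zero fun j hj => by rw [hlam j hj, abs_zero],
      tendsto_const_nhds.congr' ?_⟩
    · by_cases hj : j < n <;> simp [A', hj, hA, ha₀]
    · filter_upwards [eventually_ge_atTop n] with N hN
      simp [hsum N hN]
  have hbdd : BddBelow {s | ∃ lam a, IsDecomp 𝒜 (∑ i, c i • A i) lam a ∧ s = ∑' j, |lam j|} :=
    ⟨0, by rintro s ⟨_, _, _, rfl⟩; exact tsum_nonneg fun _ => abs_nonneg _⟩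
  refine ⟨⟨lam, A', hdecomp⟩, (csInf_le hbdd ⟨lam, A', hdecomp, rfl⟩).trans ?_⟩
  rw [tsum_eq_sum (s := Finset.range n) fun j hj => by rw [hlam j hj, abs_zero],
    ← Fin.sum_univ_eq_sum_range]
  simpa [lam] using hc

end FinAtomic

lemma abs_mul_abs_setIntegral_le {α : Type*} [MeasurableSpace α] {μ : Measure α} {s : Set α}
    (hs : MeasurableSet s) {a ω : α → ℝ} {x₀ : α} {ε : ℝ} (ha : IntegrableOn a s μ)
    (haω : IntegrableOn (fun x => a x * ω x) s μ) (hcancel : ∫ x in s, a x * ω x ∂μ = 0)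
    (hosc : ∀ x ∈ s, |ω x₀ - ω x| ≤ ε) :
    |ω x₀| * |∫ x in s, a x ∂μ| ≤ ε * ∫ x in s, |a x| ∂μ := by
  have hint : IntegrableOn (fun x => a x * (ω x₀ - ω x)) s μ := by
    simp_rw [mul_sub]
    exact (ha.mul_const (ω x₀)).sub' haω
  have hshift : ∫ x in s, a x * (ω x₀ - ω x) ∂μ = ω x₀ * ∫ x in s, a x ∂μ := by
    simp_rw [mul_sub]
    rw [integral_sub (ha.mul_const _) haω, hcancel, sub_zero, integral_mul_const, mul_comm]
  calc |ω x₀| * |∫ x in s, a x ∂μ| = |∫ x in s, a x * (ω x₀ - ω x) ∂μ| := by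
        rw [hshift, abs_mul]
    _ ≤ ∫ x in s, |a x * (ω x₀ - ω x)| ∂μ := abs_integral_le_integral_abs
    _ ≤ ∫ x in s, |a x| * ε ∂μ := by
        refine setIntegral_mono_on hint.abs (ha.abs.mul_const _) hs fun x hx => ?_
        rw [abs_mul]
        exact mul_le_mul_of_nonneg_left (hosc x hx) (abs_nonneg _)
    _ = ε * ∫ x in s, |a x| ∂μ := by rw [integral_mul_const, mul_comm]

lemma natCast_mul_rpow_le {x A l : ℝ} {N : ℕ} (hx : 0 ≤ x) (hl : 0 < l) (hN : 2 ^ N * x ≤ A) :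
    N * x ^ l ≤ A ^ l / (2 ^ l - 1) := by
  have h2l : 0 < (2 : ℝ) ^ l - 1 := sub_pos.2 (Real.one_lt_rpow one_lt_two hl)
  have hA : 0 ≤ A := (mul_nonneg (by positivity) hx).trans hN
  have hx_le : x ^ l ≤ A ^ l / ((2 : ℝ) ^ l) ^ N := by
    rw [← Real.rpow_mul_natCast zero_le_two, mul_comm, Real.rpow_natCast_mul zero_le_two,
      ← Real.div_rpow (by positivity) (by positivity)]
    exact Real.rpow_le_rpow hx ((le_div_iff₀' (by positivity)).2 hN) hl.le
  have hbernoulli : N * (2 ^ l - 1) ≤ ((2 : ℝ) ^ l) ^ N := by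
    have := one_add_mul_le_pow (a := (2 : ℝ) ^ l - 1) (by linarith) N
    rw [add_sub_cancel] at this
    linarith
  calc N * x ^ l ≤ N * (A ^ l / ((2 : ℝ) ^ l) ^ N) := by gcongr
    _ = N * (2 ^ l - 1) / ((2 : ℝ) ^ l) ^ N * (A ^ l / (2 ^ l - 1)) := by
        field_simp
    _ ≤ 1 * (A ^ l / (2 ^ l - 1)) := by
        gcongr
        exact div_le_one_of_le₀ hbernoulli (by positivity)
    _ = A ^ l / (2 ^ l - 1) := one_mul _

section Atoms

variable {d : ℕ} {θ : ℝ} {𝒬 : Set (Cube d)} {Q K : Cube d}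

lemma isWAtom_one_normalizedIndicator (hQ : Q ∈ 𝒬) :
    IsWAtom θ 𝒬 (fun _ => 1) Q.normalizedIndicator :=
  ⟨Q.integrable_normalizedIndicator, Or.inr ⟨Q, hQ, rfl⟩⟩

lemma finAtomic_of_setIntegral_eq_zero (hQ : Q ∈ 𝒬) (hK : K.carrier ⊆ Q.starSet θ 2)
    {f : Rd d → ℝ} {C : ℝ} (hC : 0 < C) (hf : Integrable f)
    (hsupp : Function.support f ⊆ K.carrier)
    (hbound : ∀ᵐ x, |f x| ≤ C * ((volume K.carrier).toReal)⁻¹)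
    (hmean : ∫ x in K.carrier, f x = 0) :
    FinAtomic (IsWAtom θ 𝒬 fun _ => 1) f C := by
  refine FinAtomic.of_inv_smul ⟨hf.smul C⁻¹, Or.inl ⟨Q, hQ, K, hK,
    (Function.support_const_smul_subset _ f).trans hsupp, ?_, ?_⟩⟩ hC
  · filter_upwards [hbound] with x hx
    rwa [Pi.smul_apply, smul_eq_mul, abs_mul, abs_inv, abs_of_pos hC, inv_mul_le_iff₀ hC]
  · simp [integral_const_mul, hmean]

lemma finAtomic_sub_mean (hQ : Q ∈ 𝒬) (hK : K.carrier ⊆ Q.starSet θ 2) {a : Rd d → ℝ}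
    (ha : Integrable a) (hsupp : Function.support a ⊆ K.carrier)
    (hbound : ∀ᵐ x, |a x| ≤ ((volume K.carrier).toReal)⁻¹) :
    FinAtomic (IsWAtom θ 𝒬 fun _ => 1)
      (a - (∫ x in K.carrier, a x) • K.normalizedIndicator) (1 + |∫ x in K.carrier, a x|) := by
  set m := ∫ x in K.carrier, a x
  refine finAtomic_of_setIntegral_eq_zero hQ hK (by positivity)
    (ha.sub (K.integrable_normalizedIndicator.smul m)) ?_ ?_ ?_
  · refine (Function.support_sub _ _).trans (Set.union_subset hsupp ?_)
    exact (Function.support_const_smul_subset _ _).trans K.support_normalizedIndicator_subset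
  · filter_upwards [hbound] with x hx
    calc |a x - m * K.normalizedIndicator x| ≤ |a x| + |m| * |K.normalizedIndicator x| := by
          rw [← abs_mul]; exact abs_sub _ _
      _ ≤ ((volume K.carrier).toReal)⁻¹ + |m| * ((volume K.carrier).toReal)⁻¹ := by
          gcongr; exact K.abs_normalizedIndicator_le x
      _ = (1 + |m|) * ((volume K.carrier).toReal)⁻¹ := by ring
  · rw [Pi.sub_def,
      integral_sub ha.integrableOn (K.integrable_normalizedIndicator.smul m).integrableOn]
    simp only [Pi.smul_apply, smul_eq_mul, integral_const_mul,
      Cube.setIntegral_normalizedIndicator subset_rfl, mul_one]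
    exact sub_self m

lemma finAtomic_normalizedIndicator_sub (hQ : Q ∈ 𝒬) (hK : K.carrier ⊆ Q.starSet θ 2)
    {K' : Cube d} (hK' : K'.carrier ⊆ K.carrier) {c : ℝ} (hc : 0 ≤ c)
    (hvol : (volume K.carrier).toReal ≤ c * (volume K'.carrier).toReal) :
    FinAtomic (IsWAtom θ 𝒬 fun _ => 1) (K'.normalizedIndicator - K.normalizedIndicator)
      (c + 1) := by
  have hK'inv : ((volume K'.carrier).toReal)⁻¹ ≤ c * ((volume K.carrier).toReal)⁻¹ := by
    rw [← div_eq_mul_inv, le_div_iff₀ K.volume_toReal_pos, inv_mul_le_iff₀ K'.volume_toReal_pos]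
    linarith
  refine finAtomic_of_setIntegral_eq_zero hQ hK (by positivity)
    (K'.integrable_normalizedIndicator.sub K.integrable_normalizedIndicator) ?_
    (ae_of_all _ fun x => ?_) ?_
  · exact (Function.support_sub _ _).trans (Set.union_subset
      (K'.support_normalizedIndicator_subset.trans hK') K.support_normalizedIndicator_subset)
  · calc |K'.normalizedIndicator x - K.normalizedIndicator x|
        ≤ |K'.normalizedIndicator x| + |K.normalizedIndicator x| := abs_sub _ _
      _ ≤ _ := by linarith [K'.abs_normalizedIndicator_le x, K.abs_normalizedIndicator_le x]
  · rw [Pi.sub_def, integral_sub K'.integrable_normalizedIndicator.integrableOn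
      K.integrable_normalizedIndicator.integrableOn]
    rw [Cube.setIntegral_normalizedIndicator hK', Cube.setIntegral_normalizedIndicator subset_rfl,
      sub_self]

lemma finAtomic_normalizedIndicator_sub_of_subset_starSet (hd : 0 < d) (hθ : 0 ≤ θ)
    (hQ : Q ∈ 𝒬) (hK : K.carrier ⊆ Q.starSet θ 2) :
    ∃ N : ℕ, 2 ^ N * K.radius ≤ 2 * ((1 + θ) ^ 2 * Q.radius) ∧
      FinAtomic (IsWAtom θ 𝒬 fun _ => 1) (K.normalizedIndicator - Q.normalizedIndicator)
        (N * (2 ^ d + 1) + ((1 + θ) ^ (2 * d) + 1)) := by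
  obtain ⟨N, L, hN, hL0, hL_mono, hL_radius, hLN, hLN_radius⟩ :=
    K.exists_doubling_chain hd hK
  have hL_star : ∀ j ≤ N, (L j).carrier ⊆ Q.starSet θ 2 := fun j hj =>
    (hL_mono hj).trans hLN.subset
  have hL_vol : ∀ j,
      (volume (L (j + 1)).carrier).toReal ≤ 2 ^ d * (volume (L j).carrier).toReal := by
    intro j
    rw [Cube.volume_toReal, Cube.volume_toReal, ← mul_pow]
    exact pow_le_pow_left₀ (by linarith [(L (j + 1)).radius_pos]) (by linarith [hL_radius j]) d
  have hQ_sub : Q.carrier ⊆ (L N).carrier := by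
    rw [hLN, Cube.carrier_eq_box, Cube.box_subset_box_iff Q.radius_pos]
    intro i
    have : 1 ≤ (1 + θ) ^ 2 := one_le_pow₀ (by linarith)
    simp only [sub_self, abs_zero, sub_nonneg]
    exact le_mul_of_one_le_left Q.radius_pos.le this
  have hQ_vol : (volume (L N).carrier).toReal
      = (1 + θ) ^ (2 * d) * (volume Q.carrier).toReal := by
    rw [Cube.volume_toReal, Cube.volume_toReal, hLN_radius, pow_mul, ← mul_pow]
    ring_nf
  have htelescope : K.normalizedIndicator - Q.normalizedIndicator
      = ∑ j ∈ Finset.range N, ((L j).normalizedIndicator - (L (j + 1)).normalizedIndicator)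
        + -(Q.normalizedIndicator - (L N).normalizedIndicator) := by
    rw [Finset.sum_range_sub', Cube.normalizedIndicator_congr hL0]
    abel
  refine ⟨N, hN, htelescope ▸ ?_⟩
  convert (FinAtomic.sum (Finset.range N) fun j hj =>
    finAtomic_normalizedIndicator_sub hQ (hL_star (j + 1) (Finset.mem_range.1 hj))
      (hL_mono j.le_succ) (by positivity) (hL_vol j)).add
    (finAtomic_normalizedIndicator_sub hQ (hL_star N le_rfl) hQ_sub (by positivity)
      hQ_vol.le).neg using 1
  simp only [Finset.sum_const, Finset.card_range, nsmul_eq_mul]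

lemma finAtomic_of_subset_starSet (hd : 0 < d) (hθ : 0 ≤ θ) (hQ : Q ∈ 𝒬)
    (hK : K.carrier ⊆ Q.starSet θ 2) {a : Rd d → ℝ} (ha : Integrable a)
    (hsupp : Function.support a ⊆ K.carrier)
    (hbound : ∀ᵐ x, |a x| ≤ ((volume K.carrier).toReal)⁻¹) :
    ∃ N : ℕ, 2 ^ N * K.radius ≤ 2 * ((1 + θ) ^ 2 * Q.radius) ∧
      FinAtomic (IsWAtom θ 𝒬 fun _ => 1) a
        (1 + |∫ x in K.carrier, a x| * (N * (2 ^ d + 1) + (1 + θ) ^ (2 * d) + 3)) := by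
  set m := ∫ x in K.carrier, a x
  obtain ⟨N, hN, hdiff⟩ := finAtomic_normalizedIndicator_sub_of_subset_starSet hd hθ hQ hK
  refine ⟨N, hN, ?_⟩
  convert (finAtomic_sub_mean hQ hK ha hsupp hbound).add ((hdiff.smul m).add
    ((FinAtomic.of_atom (isWAtom_one_normalizedIndicator (θ := θ) hQ)).smul m)) using 1
  · module
  · ring

lemma norm_center_sub_div_diam_le (hd : 0 < d) {x : Rd d} (hx : x ∈ K.carrier) :
    ‖K.center - x‖ / Q.diam ≤ K.radius / (2 * Q.radius) := by
  have hrQ := Q.radius_pos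
  rw [div_le_div_iff₀ (Q.diam_pos hd) (by positivity), Cube.diam]
  calc ‖K.center - x‖ * (2 * Q.radius) ≤ √d * K.radius * (2 * Q.radius) := by
        gcongr; exact Cube.norm_center_sub_le hx
    _ = K.radius * (2 * √d * Q.radius) := by ring

lemma finAtomic_of_isWAtom_cube (hd : 0 < d) (hθ : 0 ≤ θ) {δ C₀ l : ℝ} (hδ : 0 < δ)
    (hC₀ : 0 ≤ C₀) (hl : 0 < l) {ω : Rd d → ℝ} (hωm : Measurable ω)
    (hω : ∀ x, δ ≤ ω x ∧ ω x ≤ 1)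
    (hHol : ∀ x ∈ Q.starSet θ 2, ∀ y ∈ Q.starSet θ 2,
      |ω x - ω y| ≤ C₀ * (‖x - y‖ / Q.diam) ^ l)
    (hQ : Q ∈ 𝒬) (hK : K.carrier ⊆ Q.starSet θ 2) {a : Rd d → ℝ} (ha : Integrable a)
    (hsupp : Function.support a ⊆ K.carrier)
    (hbound : ∀ᵐ x, |a x| ≤ ((volume K.carrier).toReal)⁻¹)
    (hcancel : ∫ x in K.carrier, a x * ω x = 0) :
    FinAtomic (IsWAtom θ 𝒬 fun _ => 1) a
      ((2 ^ d + 1) * (δ⁻¹ * C₀ * ((1 + θ) ^ 2) ^ l / (2 ^ l - 1)) + (1 + θ) ^ (2 * d) + 4) := by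
  set m := ∫ x in K.carrier, a x
  set x := K.radius / (2 * Q.radius)
  have hx : 0 ≤ x := div_nonneg K.radius_pos.le (by linarith [Q.radius_pos])
  have hmass : ∫ x in K.carrier, |a x| ≤ 1 := K.setIntegral_abs_le_one ha hbound
  have hm : |m| ≤ 1 := abs_integral_le_integral_abs.trans hmass
  have hosc : ∀ y ∈ K.carrier, |ω K.center - ω y| ≤ C₀ * x ^ l := fun y hy =>
    (hHol _ (hK K.center_mem) _ (hK hy)).trans <| mul_le_mul_of_nonneg_left
      (Real.rpow_le_rpow (div_nonneg (norm_nonneg _) (Q.diam_pos hd).le)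
        (norm_center_sub_div_diam_le hd hy) hl.le) hC₀
  have haω : IntegrableOn (fun x => a x * ω x) K.carrier :=
    ha.integrableOn.mul_bdd (c := 1) hωm.aestronglyMeasurable (ae_of_all _ fun x => by
      rw [Real.norm_eq_abs, abs_le]; constructor <;> linarith [hω x])
  have hδm : δ * |m| ≤ C₀ * x ^ l :=
    calc δ * |m| ≤ |ω K.center| * |m| := by
          gcongr; exact (hω _).1.trans (le_abs_self _)
      _ ≤ C₀ * x ^ l * ∫ x in K.carrier, |a x| :=
          abs_mul_abs_setIntegral_le K.measurableSet_carrier ha.integrableOn haω hcancel hosc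
      _ ≤ C₀ * x ^ l := mul_le_of_le_one_right (by positivity) hmass
  obtain ⟨N, hN, hfin⟩ := finAtomic_of_subset_starSet hd hθ hQ hK ha hsupp hbound
  have hNx : 2 ^ N * x ≤ (1 + θ) ^ 2 := by
    rw [mul_div_assoc', div_le_iff₀ (by linarith [Q.radius_pos])]
    linarith
  have hNm : N * |m| ≤ δ⁻¹ * C₀ * ((1 + θ) ^ 2) ^ l / (2 ^ l - 1) :=
    calc N * |m| ≤ N * (δ⁻¹ * (C₀ * x ^ l)) := by
          gcongr; rwa [le_inv_mul_iff₀ hδ]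
      _ = δ⁻¹ * C₀ * (N * x ^ l) := by ring
      _ ≤ δ⁻¹ * C₀ * (((1 + θ) ^ 2) ^ l / (2 ^ l - 1)) := by
          gcongr; exact natCast_mul_rpow_le hx hl hNx
      _ = δ⁻¹ * C₀ * ((1 + θ) ^ 2) ^ l / (2 ^ l - 1) := by ring
  refine hfin.mono ?_
  have h₁ : (2 ^ d + 1) * (N * |m|)
      ≤ (2 ^ d + 1) * (δ⁻¹ * C₀ * ((1 + θ) ^ 2) ^ l / (2 ^ l - 1)) := by gcongr
  have h₂ : |m| * ((1 + θ) ^ (2 * d) + 3) ≤ (1 + θ) ^ (2 * d) + 3 :=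
    mul_le_of_le_one_left (by positivity) hm
  linarith

end Atoms

theorem statement4_general (d : ℕ) (hd : 3 ≤ d) (θ : ℝ) (hθ : 0 < θ)
    (δ C₀ l CG : ℝ) (hδ : 0 < δ) (hC₀ : 0 < C₀) (hl : 0 < l) :
    ∃ C > (0 : ℝ), ∀ 𝒬 : Set (Cube d), SatG θ CG 𝒬 →
      ∀ ω : Rd d → ℝ, Measurable ω → (∀ x, δ ≤ ω x ∧ ω x ≤ 1) →
      (∀ Q ∈ 𝒬, ∀ x ∈ Q.starSet θ 2, ∀ y ∈ Q.starSet θ 2,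
        |ω x - ω y| ≤ C₀ * (‖x - y‖ / Q.diam) ^ l) →
      ∀ a : Rd d → ℝ, IsWAtom θ 𝒬 ω a →
        MemH1at (IsWAtom θ 𝒬 (fun _ => 1)) a ∧
        H1atNorm (IsWAtom θ 𝒬 (fun _ => 1)) a ≤ C := by
  set C := (2 ^ d + 1) * (δ⁻¹ * C₀ * ((1 + θ) ^ 2) ^ l / (2 ^ l - 1)) + (1 + θ) ^ (2 * d) + 4
    with hC_def
  have hC : 1 ≤ C := by
    have : 0 ≤ δ⁻¹ * C₀ * ((1 + θ) ^ 2) ^ l / (2 ^ l - 1) :=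
      div_nonneg (by positivity) (sub_nonneg.2 (Real.one_le_rpow one_le_two hl.le))
    rw [hC_def]
    linarith [mul_nonneg (by positivity : (0 : ℝ) ≤ 2 ^ d + 1) this,
      (by positivity : (0 : ℝ) ≤ (1 + θ) ^ (2 * d))]
  refine ⟨C, by linarith, fun 𝒬 _ ω hωm hω hHol a ⟨ha, hcases⟩ => ?_⟩
  obtain ⟨Q, hQ, hfin⟩ : ∃ Q ∈ 𝒬, FinAtomic (IsWAtom θ 𝒬 fun _ => 1) a C := by
    rcases hcases with ⟨Q, hQ, K, hK, hsupp, hbound, hcancel⟩ | ⟨Q, hQ, rfl⟩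
    · exact ⟨Q, hQ, finAtomic_of_isWAtom_cube (by omega) hθ.le hδ hC₀.le hl hωm hω
        (hHol Q hQ) hQ hK ha hsupp hbound hcancel⟩
    · exact ⟨Q, hQ, (FinAtomic.of_atom (isWAtom_one_normalizedIndicator hQ)).mono hC⟩
  exact hfin.memH1at_and_h1atNorm_le (isWAtom_one_normalizedIndicator hQ)

/-- under the hypotheses of Theorem 2 there is `C > 0`, depending only on
`d, θ, δ, λ, C₀` and the constant `CG` in (G), such that every `(ω,𝒬)`-atom belongs to
`H¹_at(𝒜_𝒬)` with norm at most `C`. -/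
theorem statement4 (d : ℕ) (hd : 3 ≤ d) (θ : ℝ) (hθ : 0 < θ)
    (δ C₀ l CG : ℝ) (hδ : 0 < δ) (hC₀ : 0 < C₀) (hl : 0 < l) (hCG : 1 ≤ CG) :
    ∃ C > (0 : ℝ), ∀ 𝒬 : Set (Cube d), SatG θ CG 𝒬 →
      ∀ ω : Rd d → ℝ, Measurable ω → (∀ x, δ ≤ ω x ∧ ω x ≤ 1) →
      (∀ Q ∈ 𝒬, ∀ x ∈ Q.starSet θ 2, ∀ y ∈ Q.starSet θ 2,
        |ω x - ω y| ≤ C₀ * (‖x - y‖ / Q.diam) ^ l) →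
      ∀ a : Rd d → ℝ, IsWAtom θ 𝒬 ω a →
        MemH1at (IsWAtom θ 𝒬 (fun _ => 1)) a ∧
        H1atNorm (IsWAtom θ 𝒬 (fun _ => 1)) a ≤ C :=
  statement4_general d hd θ hθ δ C₀ l CG hδ hC₀ hl
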